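/- arXiv:0910.3087 — 3 statements merged into one kernel-verified Lean document; each statement's English description precedes it below -/
import Mathlib

section
/- Let a, b, c ∈ ℂ with c not a nonpositive integer. Then there is an open neighborhood U of 0 in ℂ such that the function g(x) = ₂F₁(a, b; c; x²) satisfies Heun's differential equation with parameters (t, q; a', b'; c'; d') = (-1, 0; 2a, 2b; 2c-1; a+b-c+1) at every x ∈ U with x ∉ {0, 1, -1}. -/
/-!
On the unit disc `₂F₁(a, b; c; ·)` is the sum of its power series `∑ Cₙ zⁿ`, which may be
differentiated term by term, and multiplying a power series by `z` shifts its coefficients.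
Hence both sides of `z F'' + c F' = z² F'' + (a + b + 1) z F' + a b F` have `n`-th coefficient
`(n + a)(n + b) Cₙ`, by the recurrence `(n + 1)(n + c) Cₙ₊₁ = (n + a)(n + b) Cₙ`; this
identity is the hypergeometric equation `z(1 - z) F'' + (c - (a + b + 1) z) F' - a b F = 0`.
Substituting `z = x²`, with `g' = 2x F'(x²)` and `g'' = 2F'(x²) + 4x² F''(x²)`, turns it into
Heun's equation with parameters `(-1, 0; 2a, 2b; 2c - 1; a + b - c + 1)` wherever `x ≠ 0, ±1`.
For `U` take the unit disc.
-/

open Complex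

/-- `g` satisfies Heun's differential equation with parameters `(t, q; a, b; c; d)`
at the point `x`: `g` is twice complex differentiable at `x` and
`g''(x) + (c/x + d/(x-1) + (a+b-c-d+1)/(x-t)) g'(x) + ((a b x - q)/(x(x-1)(x-t))) g(x) = 0`. -/
def SatisfiesHeunAt (t q a b c d : ℂ) (g : ℂ → ℂ) (x : ℂ) : Prop :=
  DifferentiableAt ℂ g x ∧ DifferentiableAt ℂ (deriv g) x ∧
    deriv (deriv g) x +
      (c / x + d / (x - 1) + (a + b - c - d + 1) / (x - t)) * deriv g x +
      ((a * b * x - q) / (x * (x - 1) * (x - t))) * g x = 0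

open FormalMultilinearSeries Topology

namespace FormalMultilinearSeries

variable {𝕜 : Type*} [RCLike 𝕜] {p : ℕ → 𝕜} {z : 𝕜}

theorem hasSum_ofScalars_sum (hz : z ∈ Metric.eball 0 (ofScalars 𝕜 p).radius) :
    HasSum (fun n => p n * z ^ n) ((ofScalars 𝕜 p).sum z) := by
  simpa [ofScalars_apply_eq, mul_comm] using
    ((ofScalars 𝕜 p).hasFPowerSeriesOnBall (Metric.pos_of_mem_eball hz)).hasSum hz

theorem hasSum_deriv_ofScalars_sum (hz : z ∈ Metric.eball 0 (ofScalars 𝕜 p).radius) :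
    HasSum (fun n => (n + 1) * p (n + 1) * z ^ n) (deriv (ofScalars 𝕜 p).sum z) := by
  have h := (((ofScalars 𝕜 p).hasFPowerSeriesOnBall (Metric.pos_of_mem_eball hz)).fderiv.hasSum
    hz).mapL (ContinuousLinearMap.apply 𝕜 𝕜 (1 : 𝕜))
  simp only [ContinuousLinearMap.apply_apply, zero_add, fderiv_apply_one_eq_deriv,
    apply_eq_pow_smul_coeff, _root_.smul_apply, derivSeries_coeff_one,
    coeff_ofScalars, nsmul_eq_mul, smul_eq_mul, Nat.cast_add_one] at h
  simpa only [mul_comm, mul_left_comm] using h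

theorem radius_ofScalars_le_radius_ofScalars_deriv :
    (ofScalars 𝕜 p).radius ≤ (ofScalars 𝕜 fun n => (n + 1) * p (n + 1)).radius := by
  refine ENNReal.le_of_forall_nnreal_lt fun r hr => ?_
  have hz : ((r : ℝ) : 𝕜) ∈ Metric.eball 0 (ofScalars 𝕜 p).radius := by
    simpa [enorm_eq_nnnorm] using hr
  refine le_radius_of_tendsto _ (l := 0) ?_
  simpa [ofScalars_norm] using (hasSum_deriv_ofScalars_sum hz).summable.tendsto_atTop_zero.norm

theorem eqOn_deriv_ofScalars_sum :
    Set.EqOn (deriv (ofScalars 𝕜 p).sum) (ofScalars 𝕜 fun n => (n + 1) * p (n + 1)).sum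
      (Metric.eball 0 (ofScalars 𝕜 p).radius) := fun _ hz =>
  (hasSum_deriv_ofScalars_sum hz).unique <| hasSum_ofScalars_sum <|
    Metric.eball_subset_eball radius_ofScalars_le_radius_ofScalars_deriv hz

theorem hasSum_deriv_deriv_ofScalars_sum (hz : z ∈ Metric.eball 0 (ofScalars 𝕜 p).radius) :
    HasSum (fun n => (n + 1) * (n + 2) * p (n + 2) * z ^ n)
      (deriv (deriv (ofScalars 𝕜 p).sum) z) := by
  rw [(eqOn_deriv_ofScalars_sum.eventuallyEq_of_mem (Metric.isOpen_eball.mem_nhds hz)).deriv_eq]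
  have h := hasSum_deriv_ofScalars_sum <|
    Metric.eball_subset_eball radius_ofScalars_le_radius_ofScalars_deriv hz
  exact h.congr_fun fun n => by push_cast; ring

end FormalMultilinearSeries

theorem hasSum_mul_pow_of_hasSum_succ {R : Type*} [CommRing R] [TopologicalSpace R]
    [IsTopologicalRing R] {q : ℕ → R} {z s : R} (h : HasSum (fun n => q (n + 1) * z ^ n) s) :
    HasSum (fun n => q n * z ^ n) (q 0 + z * s) := by
  rw [← hasSum_nat_add_iff' 1]
  simpa [add_sub_cancel_left] using (h.mul_left z).congr_fun fun n => by ring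

section Hypergeometric

variable {a b c : ℂ}

theorem ordinaryHypergeometricCoefficient_succ_mul {n : ℕ} (hn : (n : ℂ) + c ≠ 0) :
    (n + 1) * (n + c) * ordinaryHypergeometricCoefficient a b c (n + 1)
      = (n + a) * (n + b) * ordinaryHypergeometricCoefficient a b c n := by
  have hn1 : (n : ℂ) + 1 ≠ 0 := Nat.cast_add_one_ne_zero n
  simp only [ordinaryHypergeometricCoefficient, ascPochhammer_succ_eval, Nat.factorial_succ,
    Nat.cast_mul, Nat.cast_add_one]
  rw [mul_inv, mul_inv, add_comm c]
  field_simp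
  ring

theorem one_le_radius_ordinaryHypergeometricSeries (hc : ∀ n : ℕ, c ≠ -(n : ℂ)) :
    1 ≤ (ordinaryHypergeometricSeries ℂ a b c).radius := by
  by_cases h : ∃ k : ℕ, (k : ℂ) = -a ∨ (k : ℂ) = -b
  · obtain ⟨k, hk | hk⟩ := h
    · rw [show a = -k by linear_combination hk, ordinaryHypergeometric_radius_top_of_neg_nat₁]
      exact le_top
    · rw [show b = -k by linear_combination hk, ordinaryHypergeometric_radius_top_of_neg_nat₂]
      exact le_top
  · simp only [not_exists, not_or] at h
    rw [ordinaryHypergeometricSeries_radius_eq_one]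
    exact fun k => ⟨(h k).1, (h k).2, fun hk => hc k (by linear_combination hk)⟩

theorem ball_subset_eball_radius_ordinaryHypergeometricSeries (hc : ∀ n : ℕ, c ≠ -(n : ℂ)) :
    Metric.ball (0 : ℂ) 1 ⊆ Metric.eball 0 (ordinaryHypergeometricSeries ℂ a b c).radius :=
  fun z hz => Metric.eball_subset_eball (one_le_radius_ordinaryHypergeometricSeries hc)
    (by simpa [enorm_eq_nnnorm, ← NNReal.coe_lt_one] using hz)

theorem differentiableOn_ordinaryHypergeometric (hc : ∀ n : ℕ, c ≠ -(n : ℂ)) :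
    DifferentiableOn ℂ (₂F₁ a b c : ℂ → ℂ) (Metric.ball 0 1) :=
  (ordinaryHypergeometricSeries ℂ a b c).analyticOnNhd.differentiableOn.mono
    (ball_subset_eball_radius_ordinaryHypergeometricSeries hc)

theorem ordinaryHypergeometric_ode (hc : ∀ n : ℕ, c ≠ -(n : ℂ)) {z : ℂ}
    (hz : z ∈ Metric.ball 0 1) :
    z * (1 - z) * deriv (deriv (₂F₁ a b c)) z + (c - (a + b + 1) * z) * deriv (₂F₁ a b c) z
      - a * b * ₂F₁ a b c z = 0 := by
  set C := ordinaryHypergeometricCoefficient a b c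
  have hz' : z ∈ Metric.eball 0 (ofScalars ℂ C).radius :=
    ball_subset_eball_radius_ordinaryHypergeometricSeries hc hz
  have h0 : HasSum (fun n => C n * z ^ n) (₂F₁ a b c z) := hasSum_ofScalars_sum hz'
  set F' := deriv (₂F₁ a b c) z
  set F'' := deriv (deriv (₂F₁ a b c)) z
  have h1 : HasSum (fun n => (n + 1) * C (n + 1) * z ^ n) F' := hasSum_deriv_ofScalars_sum hz'
  have h2 : HasSum (fun n => (n + 1) * (n + 2) * C (n + 2) * z ^ n) F'' :=
    hasSum_deriv_deriv_ofScalars_sum hz'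
  have hθF' : HasSum (fun n => n * C n * z ^ n) (z * F') := by
    simpa using hasSum_mul_pow_of_hasSum_succ (q := fun n => n * C n) (by simpa using h1)
  have hzF'' : HasSum (fun n => n * (n + 1) * C (n + 1) * z ^ n) (z * F'') := by
    simpa using hasSum_mul_pow_of_hasSum_succ (q := fun n => n * (n + 1) * C (n + 1))
      (h2.congr_fun fun n => by push_cast; ring_nf)
  have hz2F'' : HasSum (fun n => (n - 1) * n * C n * z ^ n) (z * (z * F'')) := by
    simpa using hasSum_mul_pow_of_hasSum_succ (q := fun n => (n - 1) * n * C n)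
      (hzF''.congr_fun fun n => by push_cast; ring)
  have hlhs : HasSum (fun n => (n + a) * (n + b) * C n * z ^ n) (z * F'' + c * F') :=
    (hzF''.add (h1.mul_left c)).congr_fun fun n => by
      rw [← ordinaryHypergeometricCoefficient_succ_mul fun h => hc n (by linear_combination h)]
      ring
  have hrhs : HasSum (fun n => (n + a) * (n + b) * C n * z ^ n)
      (z * (z * F'') + (a + b + 1) * (z * F') + a * b * ₂F₁ a b c z) :=
    ((hz2F''.add (hθF'.mul_left (a + b + 1))).add (h0.mul_left (a * b))).congr_fun fun n => by ring
  linear_combination hlhs.unique hrhs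

end Hypergeometric

theorem satisfiesHeunAt_comp_sq {F : ℂ → ℂ} {V : Set ℂ} (hV : IsOpen V)
    (hF : DifferentiableOn ℂ F V) {a b c x : ℂ} (hx : x ^ 2 ∈ V) (hx0 : x ≠ 0)
    (hx1 : x ≠ 1) (hxm : x ≠ -1)
    (hode : x ^ 2 * (1 - x ^ 2) * deriv (deriv F) (x ^ 2)
      + (c - (a + b + 1) * x ^ 2) * deriv F (x ^ 2) - a * b * F (x ^ 2) = 0) :
    SatisfiesHeunAt (-1) 0 (2 * a) (2 * b) (2 * c - 1) (a + b - c + 1) (fun y => F (y ^ 2)) x := by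
  have hsq (y : ℂ) : HasDerivAt (fun y : ℂ => y ^ 2) (2 * y) y := by
    simpa using hasDerivAt_pow 2 y
  have hg' {y : ℂ} (hy : y ^ 2 ∈ V) :
      HasDerivAt (fun y => F (y ^ 2)) (deriv F (y ^ 2) * (2 * y)) y :=
    (hF.differentiableAt (hV.mem_nhds hy)).hasDerivAt.comp y (hsq y)
  have hderiv : deriv (fun y => F (y ^ 2)) =ᶠ[𝓝 x] fun y => deriv F (y ^ 2) * (2 * y) := by
    filter_upwards [(hV.preimage (continuous_pow 2)).mem_nhds hx] with y hy
    exact (hg' hy).deriv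
  have hg'' : HasDerivAt (fun y => deriv F (y ^ 2) * (2 * y))
      (deriv (deriv F) (x ^ 2) * (2 * x) * (2 * x) + deriv F (x ^ 2) * 2) x := by
    have hF'' := ((hF.deriv hV).differentiableAt (hV.mem_nhds hx)).hasDerivAt
    have h := (hF''.comp x (hsq x)).fun_mul ((hasDerivAt_id x).const_mul (2 : ℂ))
    exact h.congr_deriv (by simp)
  refine ⟨(hg' hx).differentiableAt, hderiv.differentiableAt_iff.2 hg''.differentiableAt, ?_⟩
  rw [hderiv.deriv_eq, hg''.deriv, (hg' hx).deriv]
  have h1 : x - 1 ≠ 0 := sub_ne_zero.2 hx1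
  have hm : x - -1 ≠ 0 := sub_ne_zero.2 hxm
  field_simp
  linear_combination (-4 * x) * hode

theorem stmt4 (a b c : ℂ) (hc : ∀ n : ℕ, c ≠ -(n : ℂ)) :
    ∃ U : Set ℂ, IsOpen U ∧ (0 : ℂ) ∈ U ∧ ∀ x ∈ U, x ≠ (0 : ℂ) → x ≠ (1 : ℂ) → x ≠ (-1 : ℂ) →
      SatisfiesHeunAt (-1) (0) (2*a) (2*b) (2*c - 1) (a + b - c + 1)
        (fun x : ℂ => ordinaryHypergeometric a b c (x^2)) x := by
  refine ⟨Metric.ball 0 1, Metric.isOpen_ball, Metric.mem_ball_self one_pos,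
    fun x hx hx0 hx1 hxm => ?_⟩
  have hx2 : x ^ 2 ∈ Metric.ball (0 : ℂ) 1 := by
    rw [mem_ball_zero_iff] at hx ⊢
    rw [norm_pow]
    exact pow_lt_one₀ (norm_nonneg x) hx two_ne_zero
  exact satisfiesHeunAt_comp_sq Metric.isOpen_ball (differentiableOn_ordinaryHypergeometric hc)
    hx2 hx0 hx1 hxm (ordinaryHypergeometric_ode hc hx2)
end

section
/- Let a, b, q, s ∈ ℂ with s ∉ {0, 1, -1}. Suppose y : ℂ → ℂ is analytic on an open neighborhood V of 0 and satisfies Heun's differential equation with parameters (4s/(1+s)², q; a, a+1/2; b; 1/2) at every z ∈ V with z ∉ {0, 1, 4s/(1+s)²}. Then there is an open neighborhood U of 0 such that the function g(x) = (1 + x/s)^(-2a) · y(4xs/(x+s)²) satisfies Heun's differential equation with parameters (s², (1+s)²q - 2abs; 2a, 2a-b+1; b; 2a-b+1) at every x ∈ U with x ∉ {0, 1, s², -s}. -/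
/-!
Write `g = u · (y ∘ φ)` with `u x = (1 + x/s)^(-2a)` and `φ x = 4xs/(x+s)²`, so that
`u'/u = r = -2a/(x+s)`. Expanding, `g'' + P̃ g' + Q̃ g = u · φ'² · (y'' + P y' + Q y)(φ x)` as soon as
the coefficients of `y(φ x)` and of `y'(φ x)` agree, and these are two rational identities in `x`
relating the Heun coefficients `P, Q` and `P̃, Q̃`. On the disc `|x| < |s|` the base `1 + x/s` stays
in the slit plane, and `φ x` avoids the singular points `0, 1, 4s/(1+s)²` unless `x ∈ {0, 1, s²}`.
-/

open Complex

open Filter Topology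

noncomputable def heunFirstCoeff (t a b c d x : ℂ) : ℂ :=
  c / x + d / (x - 1) + (a + b - c - d + 1) / (x - t)

noncomputable def heunZeroCoeff (t q a b x : ℂ) : ℂ :=
  (a * b * x - q) / (x * (x - 1) * (x - t))

section MulComp

variable {u φ y r φ' : ℂ → ℂ} {x r₁ φ₂ : ℂ}

theorem hasDerivAt_mul_comp (hu : HasDerivAt u (r x * u x) x) (hφ : HasDerivAt φ (φ' x) x)
    (hy : DifferentiableAt ℂ y (φ x)) :
    HasDerivAt (fun w => u w * y (φ w)) (u x * (r x * y (φ x) + φ' x * deriv y (φ x))) x := by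
  refine (hu.mul (hy.hasDerivAt.comp x hφ)).congr_deriv ?_
  simp only [Function.comp_apply]
  ring

theorem hasDerivAt_deriv_mul_comp (hu : ∀ᶠ w in 𝓝 x, HasDerivAt u (r w * u w) w)
    (hφ : ∀ᶠ w in 𝓝 x, HasDerivAt φ (φ' w) w) (hy : ∀ᶠ w in 𝓝 x, DifferentiableAt ℂ y (φ w))
    (hr : HasDerivAt r r₁ x) (hφ' : HasDerivAt φ' φ₂ x)
    (hy' : DifferentiableAt ℂ (deriv y) (φ x)) :
    HasDerivAt (deriv fun w => u w * y (φ w))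
      (u x * ((r₁ + r x ^ 2) * y (φ x) + (2 * r x * φ' x + φ₂) * deriv y (φ x)
        + φ' x ^ 2 * deriv (deriv y) (φ x))) x := by
  have hderiv : deriv (fun w => u w * y (φ w))
      =ᶠ[𝓝 x] fun w => u w * (r w * y (φ w) + φ' w * deriv y (φ w)) := by
    filter_upwards [hu, hφ, hy] with w huw hφw hyw
    exact (hasDerivAt_mul_comp huw hφw hyw).deriv
  have hyφ := hy.self_of_nhds.hasDerivAt.comp x hφ.self_of_nhds
  have hy'φ := hy'.hasDerivAt.comp x hφ.self_of_nhds
  refine HasDerivAt.congr_of_eventuallyEq ?_ hderiv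
  refine (hu.self_of_nhds.mul ((hr.mul hyφ).add (hφ'.mul hy'φ))).congr_deriv ?_
  simp only [Pi.add_apply, Pi.mul_apply, Function.comp_apply]
  ring

variable {t q α β γ δ t' q' α' β' γ' δ' : ℂ}

theorem SatisfiesHeunAt.mul_comp (hy : SatisfiesHeunAt t q α β γ δ y (φ x))
    (hyd : ∀ᶠ w in 𝓝 x, DifferentiableAt ℂ y (φ w))
    (hu : ∀ᶠ w in 𝓝 x, HasDerivAt u (r w * u w) w) (hφ : ∀ᶠ w in 𝓝 x, HasDerivAt φ (φ' w) w)
    (hr : HasDerivAt r r₁ x) (hφ' : HasDerivAt φ' φ₂ x)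
    (h₀ : r₁ + r x ^ 2 + heunFirstCoeff t' α' β' γ' δ' x * r x + heunZeroCoeff t' q' α' β' x
      = φ' x ^ 2 * heunZeroCoeff t q α β (φ x))
    (h₁ : 2 * r x * φ' x + φ₂ + heunFirstCoeff t' α' β' γ' δ' x * φ' x
      = φ' x ^ 2 * heunFirstCoeff t α β γ δ (φ x)) :
    SatisfiesHeunAt t' q' α' β' γ' δ' (fun w => u w * y (φ w)) x := by
  obtain ⟨-, hy', heq⟩ := hy
  have hD := hasDerivAt_mul_comp hu.self_of_nhds hφ.self_of_nhds hyd.self_of_nhds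
  have hD2 := hasDerivAt_deriv_mul_comp hu hφ hyd hr hφ' hy'
  refine ⟨hD.differentiableAt, hD2.differentiableAt, ?_⟩
  rw [hD2.deriv, hD.deriv]
  simp only [heunFirstCoeff, heunZeroCoeff] at h₀ h₁
  linear_combination u x * (y (φ x) * h₀ + deriv y (φ x) * h₁ + φ' x ^ 2 * heq)

end MulComp

section QuadraticTransformation

variable {a b c q s w x : ℂ}

theorem hasDerivAt_one_add_div_cpow (hs : s ≠ 0) (hw : 1 + w / s ∈ slitPlane) :
    HasDerivAt (fun w => (1 + w / s) ^ c) (c / (w + s) * (1 + w / s) ^ c) w := by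
  have hlin : HasDerivAt (fun w => 1 + w / s) (1 / s) w := by
    simpa using ((hasDerivAt_id w).div_const s).const_add 1
  have hw0 : 1 + w / s ≠ 0 := slitPlane_ne_zero hw
  have hws : s + w ≠ 0 := by
    simpa [mul_add, mul_div_cancel₀ _ hs] using mul_ne_zero hs hw0
  refine (hlin.cpow_const hw).congr_deriv ?_
  rw [cpow_sub _ _ hw0, cpow_one, add_comm w s]
  field_simp

theorem hasDerivAt_neg_div_add (hw : w + s ≠ 0) :
    HasDerivAt (fun w => -c / (w + s)) (c / (w + s) ^ 2) w := by
  refine ((hasDerivAt_const w (-c)).fun_div ((hasDerivAt_id' w).add_const s) hw).congr_deriv ?_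
  ring

theorem hasDerivAt_four_mul_mul_div_add_sq (hw : w + s ≠ 0) :
    HasDerivAt (fun w => 4 * w * s / (w + s) ^ 2) (4 * s * (s - w) / (w + s) ^ 3) w := by
  have h := (((hasDerivAt_id' w).const_mul 4).mul_const s).fun_div
    (((hasDerivAt_id' w).add_const s).fun_pow 2) (pow_ne_zero 2 hw)
  refine h.congr_deriv ?_
  field_simp
  ring

theorem hasDerivAt_four_mul_mul_sub_div_add_cube (hw : w + s ≠ 0) :
    HasDerivAt (fun w => 4 * s * (s - w) / (w + s) ^ 3) (8 * s * (w - 2 * s) / (w + s) ^ 4) w := by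
  have h := (((hasDerivAt_id' w).const_sub s).const_mul (4 * s)).fun_div
    (((hasDerivAt_id' w).add_const s).fun_pow 3) (pow_ne_zero 3 hw)
  refine h.congr_deriv ?_
  field_simp
  ring

theorem four_mul_mul_div_add_sq_sub_one (hxs : x + s ≠ 0) :
    4 * x * s / (x + s) ^ 2 - 1 = -(x - s) ^ 2 / (x + s) ^ 2 := by
  field_simp
  ring

theorem four_mul_mul_div_add_sq_sub (hxs : x + s ≠ 0) (h1s : 1 + s ≠ 0) :
    4 * x * s / (x + s) ^ 2 - 4 * s / (1 + s) ^ 2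
      = -(4 * s * (x - 1) * (x - s ^ 2)) / ((x + s) ^ 2 * (1 + s) ^ 2) := by
  field_simp
  ring

theorem heunZeroCoeff_quadratic_pullback (hs : s ≠ 0) (h1s : 1 + s ≠ 0) (hx0 : x ≠ 0)
    (hx1 : x ≠ 1) (hxs2 : x ≠ s ^ 2) (hxs : x + s ≠ 0) (hxs' : x ≠ s) :
    2 * a / (x + s) ^ 2 + (-(2 * a) / (x + s)) ^ 2
        + heunFirstCoeff (s ^ 2) (2 * a) (2 * a - b + 1) b (2 * a - b + 1) x * (-(2 * a) / (x + s))
        + heunZeroCoeff (s ^ 2) ((1 + s) ^ 2 * q - 2 * a * b * s) (2 * a) (2 * a - b + 1) x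
      = (4 * s * (s - x) / (x + s) ^ 3) ^ 2
        * heunZeroCoeff (4 * s / (1 + s) ^ 2) q a (a + 1 / 2) (4 * x * s / (x + s) ^ 2) := by
  unfold heunFirstCoeff heunZeroCoeff
  rw [four_mul_mul_div_add_sq_sub_one hxs, four_mul_mul_div_add_sq_sub hxs h1s]
  field_simp
  ring

theorem heunFirstCoeff_quadratic_pullback (hs : s ≠ 0) (h1s : 1 + s ≠ 0) (hx0 : x ≠ 0)
    (hx1 : x ≠ 1) (hxs2 : x ≠ s ^ 2) (hxs : x + s ≠ 0) (hxs' : x ≠ s) :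
    2 * (-(2 * a) / (x + s)) * (4 * s * (s - x) / (x + s) ^ 3) + 8 * s * (x - 2 * s) / (x + s) ^ 4
        + heunFirstCoeff (s ^ 2) (2 * a) (2 * a - b + 1) b (2 * a - b + 1) x
          * (4 * s * (s - x) / (x + s) ^ 3)
      = (4 * s * (s - x) / (x + s) ^ 3) ^ 2
        * heunFirstCoeff (4 * s / (1 + s) ^ 2) a (a + 1 / 2) b (1 / 2) (4 * x * s / (x + s) ^ 2) := by
  unfold heunFirstCoeff
  rw [four_mul_mul_div_add_sq_sub_one hxs, four_mul_mul_div_add_sq_sub hxs h1s]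
  field_simp
  ring

end QuadraticTransformation

theorem stmt7_general (a b q s : ℂ) (hs0 : s ≠ 0) (hsm1 : s ≠ -1)
    (y : ℂ → ℂ) (V : Set ℂ) (hV : IsOpen V) (h0V : (0 : ℂ) ∈ V)
    (hya : AnalyticOnNhd ℂ y V)
    (hy : ∀ z ∈ V, z ≠ 0 → z ≠ 1 → z ≠ 4*s/(1+s)^2 →
      SatisfiesHeunAt (4*s/(1+s)^2) q a (a + 1/2) b (1/2) y z) :
    ∃ U : Set ℂ, IsOpen U ∧ (0 : ℂ) ∈ U ∧ ∀ x ∈ U,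
      x ≠ 0 → x ≠ 1 → x ≠ s^2 → x ≠ -s →
      SatisfiesHeunAt (s^2) ((1+s)^2*q - 2*a*b*s) (2*a) (2*a - b + 1) b (2*a - b + 1)
        (fun x : ℂ => (1 + x/s) ^ (-(2*a)) * y (4*x*s/(x+s)^2)) x := by
  have h1s : 1 + s ≠ 0 := fun h => hsm1 (by linear_combination h)
  have hball : ∀ w ∈ Metric.ball (0 : ℂ) ‖s‖, w + s ≠ 0 ∧ w ≠ s ∧ 1 + w / s ∈ slitPlane := by
    intro w hw
    rw [mem_ball_zero_iff] at hw
    refine ⟨fun h => ?_, fun h => ?_, mem_slitPlane_of_norm_lt_one ?_⟩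
    · rw [eq_neg_of_add_eq_zero_left h, norm_neg] at hw
      exact hw.false
    · exact (h ▸ hw).false
    · rwa [norm_div, div_lt_one (norm_pos_iff.mpr hs0)]
  set U := Metric.ball (0 : ℂ) ‖s‖ ∩ (fun w => 4 * w * s / (w + s) ^ 2) ⁻¹' V
  have hU : IsOpen U := ContinuousOn.isOpen_inter_preimage
    (fun w hw => (hasDerivAt_four_mul_mul_div_add_sq (hball w hw).1).continuousAt.continuousWithinAt)
    Metric.isOpen_ball hV
  refine ⟨U, hU, ⟨by simpa using hs0, by simpa using h0V⟩, ?_⟩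
  rintro x hxU hx0 hx1 hxs2 -
  obtain ⟨hxs, hxs', -⟩ := hball x hxU.1
  have hz0 : 4 * x * s / (x + s) ^ 2 ≠ 0 := by simp [hx0, hs0, hxs]
  have hz1 : 4 * x * s / (x + s) ^ 2 ≠ 1 := sub_ne_zero.mp <| by
    rw [four_mul_mul_div_add_sq_sub_one hxs]
    simp [sub_eq_zero, hxs', hxs]
  have hzt : 4 * x * s / (x + s) ^ 2 ≠ 4 * s / (1 + s) ^ 2 := sub_ne_zero.mp <| by
    rw [four_mul_mul_div_add_sq_sub hxs h1s]
    simp [sub_eq_zero, hs0, hx1, hxs2, hxs, h1s]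
  have hUx : ∀ᶠ w in 𝓝 x, w ∈ U := hU.mem_nhds hxU
  refine SatisfiesHeunAt.mul_comp (φ := fun w => 4 * w * s / (w + s) ^ 2)
    (u := fun w => (1 + w / s) ^ (-(2 * a))) (hy _ hxU.2 hz0 hz1 hzt)
    (r := fun w => -(2 * a) / (w + s)) (φ' := fun w => 4 * s * (s - w) / (w + s) ^ 3)
    ?_ ?_ ?_ (hasDerivAt_neg_div_add hxs) (hasDerivAt_four_mul_mul_sub_div_add_cube hxs)
    (heunZeroCoeff_quadratic_pullback hs0 h1s hx0 hx1 hxs2 hxs hxs')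
    (heunFirstCoeff_quadratic_pullback hs0 h1s hx0 hx1 hxs2 hxs hxs')
  · filter_upwards [hUx] with w hw
    exact (hya _ hw.2).differentiableAt
  · filter_upwards [hUx] with w hw
    exact hasDerivAt_one_add_div_cpow hs0 (hball w hw.1).2.2
  · filter_upwards [hUx] with w hw
    exact hasDerivAt_four_mul_mul_div_add_sq (hball w hw.1).1

theorem stmt7 (a b q s : ℂ) (hs0 : s ≠ 0) (hs1 : s ≠ 1) (hsm1 : s ≠ -1)
    (y : ℂ → ℂ) (V : Set ℂ) (hV : IsOpen V) (h0V : (0 : ℂ) ∈ V)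
    (hya : AnalyticOnNhd ℂ y V)
    (hy : ∀ z ∈ V, z ≠ 0 → z ≠ 1 → z ≠ 4*s/(1+s)^2 →
      SatisfiesHeunAt (4*s/(1+s)^2) q a (a + 1/2) b (1/2) y z) :
    ∃ U : Set ℂ, IsOpen U ∧ (0 : ℂ) ∈ U ∧ ∀ x ∈ U,
      x ≠ 0 → x ≠ 1 → x ≠ s^2 → x ≠ -s →
      SatisfiesHeunAt (s^2) ((1+s)^2*q - 2*a*b*s) (2*a) (2*a - b + 1) b (2*a - b + 1)
        (fun x : ℂ => (1 + x/s) ^ (-(2*a)) * y (4*x*s/(x+s)^2)) x :=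
  stmt7_general a b q s hs0 hsm1 y V hV h0V hya hy
end

section
/- There do not exist complex numbers C₁, C₂, a, b such that the polynomial identity X - C₁·(X² + aX + b)² = C₂·(3X² + aX - b)² holds in ℂ[X]. (Consequently, there is no rational covering of degree 4 of the projective line branched only above {0, 1, ∞} with branching pattern 2+2 above 0, 2+2 above 1, and 3+1 above ∞.) -/
/-!
Compare the coefficients of `X⁴, X², X, 1` on both sides. The `X⁴` coefficient forces
`C₁ = -9 C₂`, and then the remaining three read `20abC₂ = -1`, `8a²C₂ = -24bC₂` and
`8b²C₂ = 0`. Hence `1 = (20abC₂)² = 50 (b²C₂)(8a²C₂) = -150 (bC₂)(8b²C₂) = 0`.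
No division is needed, so the argument works over every nontrivial commutative ring.
-/

open Polynomial

theorem coeff_system_inconsistent {R : Type*} [CommRing R] [Nontrivial R] {C₁ C₂ a b : R}
    (h4 : C₁ + 9 * C₂ = 0) (h2 : C₁ * (a ^ 2 + 2 * b) + C₂ * (a ^ 2 - 6 * b) = 0)
    (h1 : 2 * a * b * (C₁ - C₂) - 1 = 0) (h0 : b ^ 2 * (C₁ + C₂) = 0) : False := by
  have hC₁ : C₁ = -9 * C₂ := by linear_combination h4
  subst hC₁
  have hab : 20 * a * b * C₂ = -1 := by linear_combination -h1
  have ha : 8 * a ^ 2 * C₂ = -24 * b * C₂ := by linear_combination -h2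
  have hb : 8 * b ^ 2 * C₂ = 0 := by linear_combination -h0
  refine one_ne_zero (α := R) ?_
  calc (1 : R) = (20 * a * b * C₂) ^ 2 := by rw [hab]; ring
    _ = 50 * (b ^ 2 * C₂) * (8 * a ^ 2 * C₂) := by ring
    _ = -150 * (b * C₂) * (8 * b ^ 2 * C₂) := by rw [ha]; ring
    _ = 0 := by rw [hb]; ring

theorem X_sub_C_mul_sq_ne_C_mul_sq {R : Type*} [CommRing R] [Nontrivial R] (C₁ C₂ a b : R) :
    (X : R[X]) - C C₁ * (X ^ 2 + C a * X + C b) ^ 2 ≠ C C₂ * (3 * X ^ 2 + C a * X - C b) ^ 2 := by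
  intro h
  have hdiff : C (C₁ + 9 * C₂) * X ^ 4 + C (2 * a * (C₁ + 3 * C₂)) * X ^ 3
      + C (C₁ * (a ^ 2 + 2 * b) + C₂ * (a ^ 2 - 6 * b)) * X ^ 2
      + C (2 * a * b * (C₁ - C₂) - 1) * X + C (b ^ 2 * (C₁ + C₂)) = 0 := by
    simp only [map_add, map_sub, map_mul, map_pow, map_one, map_ofNat]
    linear_combination -h
  have hcoeff (n : ℕ) := congrArg (coeff · n) hdiff
  simp only [coeff_add, coeff_C_mul, coeff_X_pow, coeff_X, coeff_C, coeff_zero] at hcoeff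
  exact coeff_system_inconsistent (by simpa using hcoeff 4) (by simpa using hcoeff 2)
    (by simpa using hcoeff 1) (by simpa using hcoeff 0)

open Polynomial in
theorem stmt18 :
    ¬ ∃ (C₁ C₂ a b : ℂ),
      (X : ℂ[X]) - Polynomial.C C₁ * (X^2 + Polynomial.C a * X + Polynomial.C b)^2 =
        Polynomial.C C₂ * (3*X^2 + Polynomial.C a * X - Polynomial.C b)^2 := by
  rintro ⟨C₁, C₂, a, b, h⟩
  exact X_sub_C_mul_sq_ne_C_mul_sq C₁ C₂ a b h
end
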